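/- For every map u from the set of edges to {−1,1} and every integer t ≥ 1, Σ_{x∈ℤ} P(x,t,u) = 1. -/

import Mathlib

open scoped BigOperators

/-- The final x-coordinate of a checker path from `(0,0)` encoded by its sequence of moves
(`true` = move `(1,1)`, `false` = move `(-1,1)`). -/
def moveEndpoint {n : ℕ} (d : Fin n → Bool) : ℤ :=
  ∑ k, (if d k then (1 : ℤ) else -1)

/-- The number of turns of a checker path encoded by its sequence of moves. -/
def nturns {n : ℕ} (d : Fin n → Bool) : ℕ :=
  ((List.ofFn d).zip (List.ofFn d).tail).countP fun p => p.1 != p.2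

/-- Checker paths from `(0,0)` to `(x,t)` whose first step is to `(1,1)`,
encoded by their sequences of moves. -/
def cpaths (x t : ℤ) : Finset (Fin t.toNat → Bool) :=
  Finset.univ.filter fun d => moveEndpoint d = x ∧ (List.ofFn d).headI = true

/-- The x-coordinate of the `k`-th point of the path encoded by moves `d`. -/
def cpos {n : ℕ} (d : Fin n → Bool) (k : Fin n) : ℤ :=
  ∑ j ∈ Finset.univ.filter (fun j : Fin n => (j : ℕ) < (k : ℕ)), (if d j then (1 : ℤ) else -1)

/-- Product of the values of the field `u` over the edges of the path encoded by `d`.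
Here `u x t` denotes the value of the field on the edge with midpoint `(x + 1/2, t + 1/2)`. -/
def fieldWeight (u : ℤ → ℤ → ℝ) {n : ℕ} (d : Fin n → Bool) : ℝ :=
  ∏ k : Fin n, (if d k then u (cpos d k) (k : ℕ) else u (cpos d k - 1) (k : ℕ))

/-- Feynman checkers amplitude `a(x,t,u)` in an external field `u`, where `u x t` is
the value of the field on the edge with midpoint `(x + 1/2, t + 1/2)`. -/
noncomputable def af (u : ℤ → ℤ → ℝ) (x t : ℤ) : ℂ :=
  (Real.sqrt 2 : ℂ) ^ (1 - t) * Complex.I *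
    ∑ d ∈ cpaths x t, (-Complex.I) ^ nturns d * (fieldWeight u d : ℂ)

/-!
Split the amplitude at time `n + 1` according to the direction `b` of the last step:
`a(x, n + 1) = 2^(-n/2) i (A(x, →) + A(x, ←))`. Appending a step to a path gives the lattice
Dirac equation `A_{n+1}(x, b) = u · ∑_c φ(c, b) A_n(x - b, c)` with `φ = [[1, -i], [-i, 1]]`.
By induction on it, `A(x, →)` is real and `A(x, ←)` purely imaginary, so that
`P(x, n + 1) = 2^(-n) (|A(x, →)|² + |A(x, ←)|²)`. Since `φ / √2` is unitary and `|u| = 1`,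
each time step doubles `∑_x ∑_b |A_n(x, b)|²`, which therefore equals `2^n`.
-/

open Complex (I)

def moveStep (b : Bool) : ℤ := if b then 1 else -1

section Moves

variable {n : ℕ}

lemma nturns_eq_sum (d : Fin (n + 1) → Bool) :
    nturns d = ∑ k : Fin n, if d k.castSucc = d k.succ then 0 else 1 := by
  induction n with
  | zero => rfl
  | succ n ih =>
    have hcons : nturns d = (if d 0 = d 1 then 0 else 1) + nturns (Fin.tail d) := by
      simp only [nturns, List.ofFn_succ, List.tail_cons, List.zip_cons_cons, List.countP_cons]
      rw [add_comm, Fin.succ_zero_eq_one]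
      congr 1
      cases d 0 <;> cases d 1 <;> rfl
    rw [hcons, ih, Fin.sum_univ_succ]
    rfl

lemma nturns_snoc (d : Fin (n + 1) → Bool) (b : Bool) :
    nturns (Fin.snoc d b : Fin (n + 2) → Bool)
      = nturns d + if d (Fin.last n) = b then 0 else 1 := by
  simp only [nturns_eq_sum, Fin.sum_univ_castSucc (n := n), Fin.succ_castSucc, Fin.snoc_castSucc,
    Fin.succ_last, Fin.snoc_last]

lemma moveEndpoint_snoc (d : Fin n → Bool) (b : Bool) :
    moveEndpoint (Fin.snoc d b : Fin (n + 1) → Bool) = moveEndpoint d + moveStep b := by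
  simp [moveEndpoint, moveStep, Fin.sum_univ_castSucc]

lemma cpos_snoc_castSucc (d : Fin n → Bool) (b : Bool) (k : Fin n) :
    cpos (Fin.snoc d b : Fin (n + 1) → Bool) k.castSucc = cpos d k := by
  simp [cpos, Finset.sum_filter, Fin.sum_univ_castSucc]

lemma cpos_snoc_last (d : Fin n → Bool) (b : Bool) :
    cpos (Fin.snoc d b : Fin (n + 1) → Bool) (Fin.last n) = moveEndpoint d := by
  simp [cpos, moveEndpoint, Finset.sum_filter, Fin.sum_univ_castSucc]

lemma snoc_apply_zero (d : Fin (n + 1) → Bool) (b : Bool) :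
    (Fin.snoc d b : Fin (n + 2) → Bool) 0 = d 0 :=
  Fin.snoc_castSucc (α := fun _ => Bool) _ _ 0

end Moves

/-- The value of `u` on the edge from `(y, t)` to `(y + moveStep b, t + 1)`. -/
def edgeField (u : ℤ → ℤ → ℝ) (y : ℤ) (b : Bool) (t : ℤ) : ℝ :=
  if b then u y t else u (y - 1) t

def turnFactor (c b : Bool) : ℂ := if c = b then 1 else -I

noncomputable def pathWeight (u : ℤ → ℤ → ℝ) {n : ℕ} (d : Fin n → Bool) : ℂ :=
  (-I) ^ nturns d * fieldWeight u d

/-- The part of the unnormalised amplitude at `(x, n + 1)` coming from paths whose last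
step is `b`. -/
noncomputable def partialAmp (u : ℤ → ℤ → ℝ) (n : ℕ) (x : ℤ) (b : Bool) : ℂ :=
  ∑ d : Fin (n + 1) → Bool with d 0 = true ∧ moveEndpoint d = x ∧ d (Fin.last n) = b,
    pathWeight u d

section Recursion

variable (u : ℤ → ℤ → ℝ) {n : ℕ}

lemma fieldWeight_snoc (d : Fin n → Bool) (b : Bool) :
    fieldWeight u (Fin.snoc d b : Fin (n + 1) → Bool)
      = fieldWeight u d * edgeField u (moveEndpoint d) b n := by
  simp only [fieldWeight, Fin.prod_univ_castSucc, Fin.snoc_castSucc, cpos_snoc_castSucc,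
    Fin.val_castSucc, Fin.snoc_last, cpos_snoc_last, Fin.val_last, edgeField]

lemma pathWeight_snoc (d : Fin (n + 1) → Bool) (b : Bool) :
    pathWeight u (Fin.snoc d b : Fin (n + 2) → Bool)
      = turnFactor (d (Fin.last n)) b * edgeField u (moveEndpoint d) b (n + 1) *
          pathWeight u d := by
  rw [pathWeight, pathWeight, nturns_snoc, fieldWeight_snoc, turnFactor]
  split_ifs <;> push_cast <;> ring

end Recursion

lemma partialAmp_succ (u : ℤ → ℤ → ℝ) (n : ℕ) (x : ℤ) (b : Bool) :
    partialAmp u (n + 1) x b = edgeField u (x - moveStep b) b (n + 1) *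
      ∑ c, turnFactor c b * partialAmp u n (x - moveStep b) c := by
  obtain ⟨y, rfl⟩ : ∃ y, x = y + moveStep b := ⟨x - moveStep b, by ring⟩
  rw [add_sub_cancel_right]
  simp only [partialAmp, Finset.sum_filter, Finset.mul_sum]
  rw [← (Fin.snocEquiv fun _ => Bool).sum_comp, Fintype.sum_prod_type, Finset.sum_comm]
  conv_rhs => rw [Finset.sum_comm]
  refine Finset.sum_congr rfl fun d _ => ?_
  have hsnoc (c : Bool) : (Fin.snocEquiv fun _ => Bool) (c, d) = Fin.snoc d c := rfl
  simp only [hsnoc, moveEndpoint_snoc, Fin.snoc_last, pathWeight_snoc, snoc_apply_zero]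
  by_cases hd : d 0 = true ∧ moveEndpoint d = y
  · cases b <;> simp [hd, moveStep] <;> ring
  · have hd' (c : Bool) : ¬(d 0 = true ∧ moveEndpoint d = y ∧ d (Fin.last n) = c) :=
      fun h => hd ⟨h.1, h.2.1⟩
    cases b <;> simp [hd, hd', moveStep]

lemma partialAmp_zero (u : ℤ → ℤ → ℝ) (x : ℤ) (b : Bool) :
    partialAmp u 0 x b = if x = 1 ∧ b = true then (u 0 0 : ℂ) else 0 := by
  rw [partialAmp, Finset.sum_filter, ← (Equiv.funUnique (Fin 1) Bool).symm.sum_comp,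
    Fintype.sum_bool]
  simp [pathWeight, nturns, fieldWeight, cpos, moveEndpoint, eq_comm]

lemma partialAmp_im_true_and_re_false (u : ℤ → ℤ → ℝ) (n : ℕ) (x : ℤ) :
    (partialAmp u n x true).im = 0 ∧ (partialAmp u n x false).re = 0 := by
  induction n generalizing x with
  | zero => simp [partialAmp_zero, apply_ite Complex.im]
  | succ n ih =>
    simp only [partialAmp_succ, Fintype.sum_bool, turnFactor]
    simp [Complex.mul_re, Complex.mul_im, (ih _).1, (ih _).2]

lemma partialAmp_eq_zero_of_notMem_range (u : ℤ → ℤ → ℝ) {n : ℕ} {x : ℤ}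
    (hx : x ∉ Set.range (moveEndpoint (n := n + 1))) (b : Bool) : partialAmp u n x b = 0 :=
  Finset.sum_eq_zero fun d hd => absurd ⟨d, (Finset.mem_filter.1 hd).2.2.1⟩ hx

lemma summable_norm_sq_partialAmp (u : ℤ → ℤ → ℝ) (n : ℕ) (b : Bool) :
    Summable fun x => ‖partialAmp u n x b‖ ^ 2 := by
  refine summable_of_hasFiniteSupport <| (Set.finite_range (moveEndpoint (n := n + 1))).subset ?_
  intro x hx
  by_contra hxr
  exact hx (by simp [partialAmp_eq_zero_of_notMem_range u hxr])

lemma sum_norm_sq_sum_turnFactor_mul (z : Bool → ℂ) :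
    ∑ b, ‖∑ c, turnFactor c b * z c‖ ^ 2 = 2 * ∑ c, ‖z c‖ ^ 2 := by
  simp only [Fintype.sum_bool, turnFactor, Complex.sq_norm, Complex.normSq_apply]
  simp
  ring

section UnitField

variable {u : ℤ → ℤ → ℝ} (hu : ∀ x t, |u x t| = 1)
include hu

lemma norm_edgeField (y : ℤ) (b : Bool) (t : ℤ) : ‖(edgeField u y b t : ℂ)‖ = 1 := by
  rw [Complex.norm_real, Real.norm_eq_abs, edgeField]
  split_ifs <;> exact hu _ _

lemma sum_norm_sq_partialAmp_succ (n : ℕ) (y : ℤ) :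
    ∑ b, ‖partialAmp u (n + 1) (y + moveStep b) b‖ ^ 2
      = 2 * ∑ c, ‖partialAmp u n y c‖ ^ 2 := by
  simp only [partialAmp_succ, add_sub_cancel_right, norm_mul, norm_edgeField hu, one_mul]
  exact sum_norm_sq_sum_turnFactor_mul _

lemma tsum_sum_norm_sq_partialAmp (n : ℕ) :
    ∑' x, ∑ b, ‖partialAmp u n x b‖ ^ 2 = 2 ^ n := by
  induction n with
  | zero =>
    have hmass (x : ℤ) : ∑ b, ‖partialAmp u 0 x b‖ ^ 2 = if x = 1 then 1 else 0 := by
      by_cases hx : x = 1 <;> simp [partialAmp_zero, hx, hu 0 0]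
    rw [tsum_congr hmass, tsum_ite_eq, pow_zero]
  | succ n ih =>
    have hshift (b : Bool) : Summable fun y => ‖partialAmp u (n + 1) (y + moveStep b) b‖ ^ 2 :=
      (Equiv.addRight (moveStep b)).summable_iff.2 (summable_norm_sq_partialAmp u (n + 1) b)
    calc ∑' x, ∑ b, ‖partialAmp u (n + 1) x b‖ ^ 2
        = ∑ b, ∑' x, ‖partialAmp u (n + 1) x b‖ ^ 2 :=
          Summable.tsum_finsetSum fun b _ => summable_norm_sq_partialAmp u (n + 1) b
      _ = ∑ b, ∑' y, ‖partialAmp u (n + 1) (y + moveStep b) b‖ ^ 2 :=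
          Finset.sum_congr rfl fun b _ => ((Equiv.addRight (moveStep b)).tsum_eq _).symm
      _ = ∑' y, ∑ b, ‖partialAmp u (n + 1) (y + moveStep b) b‖ ^ 2 :=
          (Summable.tsum_finsetSum fun b _ => hshift b).symm
      _ = 2 ^ (n + 1) := by
          rw [tsum_congr (sum_norm_sq_partialAmp_succ hu n), tsum_mul_left, ih, pow_succ, mul_comm]

end UnitField

lemma af_natCast_succ (u : ℤ → ℤ → ℝ) (n : ℕ) (x : ℤ) :
    af u x (n + 1 : ℕ) = (Real.sqrt 2 : ℂ) ^ (-(n : ℤ)) * I * ∑ b, partialAmp u n x b := by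
  have hexp : (1 : ℤ) - (n + 1 : ℕ) = -(n : ℤ) := by push_cast; ring
  change _ * ∑ d : Fin (n + 1) → Bool with moveEndpoint d = x ∧ (List.ofFn d).headI = true,
    pathWeight u d = _
  rw [hexp, ← Finset.sum_fiberwise _ (fun d : Fin (n + 1) → Bool => d (Fin.last n))]
  refine congrArg _ (Finset.sum_congr rfl fun b _ => ?_)
  rw [partialAmp, Finset.filter_filter]
  refine Finset.sum_congr (Finset.filter_congr fun d _ => ?_) fun d _ => rfl
  rw [List.ofFn_succ, List.headI_cons]
  tauto

lemma norm_sq_af (u : ℤ → ℤ → ℝ) (n : ℕ) (x : ℤ) :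
    ‖af u x (n + 1 : ℕ)‖ ^ 2 = (2 ^ n)⁻¹ * ∑ b, ‖partialAmp u n x b‖ ^ 2 := by
  have hscale : ‖(Real.sqrt 2 : ℂ) ^ (-(n : ℤ))‖ ^ 2 = (2 ^ n)⁻¹ := by
    rw [norm_zpow, Complex.norm_real, Real.norm_of_nonneg (Real.sqrt_nonneg 2), zpow_neg,
      zpow_natCast, inv_pow, ← pow_mul, mul_comm, pow_mul, Real.sq_sqrt zero_le_two]
  obtain ⟨him, hre⟩ := partialAmp_im_true_and_re_false u n x
  rw [af_natCast_succ, norm_mul, norm_mul, Complex.norm_I, mul_one, mul_pow, hscale,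
    Fintype.sum_bool, Fintype.sum_bool]
  congr 1
  simp only [Complex.sq_norm, Complex.normSq_apply, Complex.add_re, Complex.add_im, him, hre]
  ring

/-- Probability/charge conservation in an external field. -/
theorem probability_conservation_field (u : ℤ → ℤ → ℝ)
    (hu : ∀ x t : ℤ, u x t = 1 ∨ u x t = -1) (t : ℤ) (ht : 1 ≤ t) :
    ∑' x : ℤ, ‖af u x t‖ ^ 2 = 1 := by
  obtain ⟨n, rfl⟩ : ∃ n : ℕ, t = (n + 1 : ℕ) := ⟨(t - 1).toNat, by omega⟩
  have hu_abs : ∀ x t, |u x t| = 1 := fun x t => by rcases hu x t with h | h <;> simp [h]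
  simp only [norm_sq_af, tsum_mul_left, tsum_sum_norm_sq_partialAmp hu_abs]
  exact inv_mul_cancel₀ (pow_ne_zero n two_ne_zero)
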